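/- Well-posedness of the atomistic subproblem for large subdomains: there exists L₀, depending only on k1 and k2, such that for every integer L ≥ L₀, every g : {2,…,L−2} → ℝ and every prescribed boundary data b₀, b₁, b_{L−1}, b_L ∈ ℝ, there is exactly one function uᵃ : {0,…,L} → ℝ satisfying (A uᵃ)_i = g_i for 2 ≤ i ≤ L−2 together with uᵃ_0 = b₀, uᵃ_1 = b₁, uᵃ_{L−1} = b_{L−1}, uᵃ_L = b_L. -/

import Mathlib

/-!
Summation by parts gives, for finitely supported `v : ℤ → ℝ`, the energy identity
`∑ (A v)ᵢ vᵢ = k1 ∑ (v_{i+1} - vᵢ)² + k2 ∑ (v_{i+2} - vᵢ)²`, and since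
`(v_{i+2} - vᵢ)² ≤ 2 (v_{i+2} - v_{i+1})² + 2 (v_{i+1} - vᵢ)²` the energy is at least
`(k1 + 4 k2) ∑ (v_{i+1} - vᵢ)²`. Hence a finitely supported `v` with `(A v)ᵢ = 0` wherever
`vᵢ ≠ 0` vanishes. This gives uniqueness, and it makes the square system for the interior values
`u₂, …, u_{L-2}` (after subtracting any extension of the boundary data) injective, hence solvable.
-/

open Function

theorem finsum_comp_add_right {G M : Type*} [AddGroup G] [AddCommMonoid M] (f : G → M) (h : G) :
    ∑ᶠ x, f (x + h) = ∑ᶠ x, f x :=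
  finsum_comp_equiv (Equiv.addRight h)

theorem Function.HasFiniteSupport.eq_zero_of_finsum_sq_sub_eq_zero {v : ℤ → ℝ}
    (hv : v.HasFiniteSupport) (h : ∑ᶠ i, (v (i + 1) - v i) ^ 2 = 0) : v = 0 := by
  have hD : (fun i => (v (i + 1) - v i) ^ 2).HasFiniteSupport := by
    fun_prop (disch := first | exact add_left_injective _ | norm_num)
  have hstep : ∀ i, v (i + 1) = v i := by
    intro i
    by_contra hi
    exact (finsum_pos (f := fun i => (v (i + 1) - v i) ^ 2) (fun _ => sq_nonneg _)
      ⟨i, pow_two_pos_of_ne_zero (sub_ne_zero.mpr hi)⟩ hD).ne' h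
  have hconst : ∀ i, v i = v 0 := fun i =>
    Int.induction_on i rfl (fun j hj => (hstep j).trans hj)
      (fun j hj => by rw [← hj, ← hstep (-j - 1), sub_add_cancel])
  have h0 : v 0 = 0 := by
    by_contra h0
    exact Set.infinite_univ (hv.subset fun i _ => by rwa [mem_support, hconst i])
  exact funext fun i => (hconst i).trans h0

section SecondDiff

variable {G R : Type*} [AddGroup G] [CommRing R]

def secondDiff (h : G) : (G → R) →ₗ[R] G → R where
  toFun u x := u (x - h) - 2 * u x + u (x + h)
  map_add' u v := by ext x; simp only [Pi.add_apply]; ring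
  map_smul' c u := by ext x; simp only [Pi.smul_apply, smul_eq_mul, RingHom.id_apply]; ring

theorem secondDiff_apply (h : G) (u : G → R) (x : G) :
    secondDiff h u x = u (x - h) - 2 * u x + u (x + h) :=
  rfl

theorem finsum_secondDiff_mul_self {v : G → R} (hv : v.HasFiniteSupport) (h : G) :
    ∑ᶠ x, secondDiff h v x * v x = -∑ᶠ x, (v (x + h) - v x) ^ 2 := by
  set φ : G → R := fun x => (v x - v (x - h)) * v x
  have hφ : φ.HasFiniteSupport := hv.fun_mul_right _
  have hpointwise : ∀ x, secondDiff h v x * v x = (φ (x + h) - φ x) - (v (x + h) - v x) ^ 2 := by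
    intro x
    simp only [secondDiff_apply, φ, add_sub_cancel_right]
    ring
  simp_rw [hpointwise]
  rw [finsum_sub_distrib (by fun_prop (disch := exact add_left_injective h))
      (by fun_prop (disch := first | exact add_left_injective h | norm_num)),
    finsum_sub_distrib (by fun_prop (disch := exact add_left_injective h)) hφ,
    finsum_comp_add_right, sub_self, zero_sub]

end SecondDiff

theorem finsum_sq_sub_two_le {v : ℤ → ℝ} (hv : v.HasFiniteSupport) :
    ∑ᶠ i, (v (i + 2) - v i) ^ 2 ≤ 4 * ∑ᶠ i, (v (i + 1) - v i) ^ 2 := by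
  have hshift : ∑ᶠ i, (v (i + 2) - v (i + 1)) ^ 2 = ∑ᶠ i, (v (i + 1) - v i) ^ 2 := by
    simpa [add_assoc] using finsum_comp_add_right (fun i => (v (i + 1) - v i) ^ 2) 1
  calc ∑ᶠ i, (v (i + 2) - v i) ^ 2
      ≤ ∑ᶠ i, (2 * (v (i + 2) - v (i + 1)) ^ 2 + 2 * (v (i + 1) - v i) ^ 2) := by
        refine finsum_le_finsum'
          (by fun_prop (disch := first | exact add_left_injective _ | norm_num))
          (by fun_prop (disch := first | exact add_left_injective _ | norm_num)) fun i => ?_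
        nlinarith [sq_nonneg (v (i + 2) - 2 * v (i + 1) + v i)]
    _ = 4 * ∑ᶠ i, (v (i + 1) - v i) ^ 2 := by
        rw [finsum_add_distrib
            (by fun_prop (disch := first | exact add_left_injective _ | norm_num))
            (by fun_prop (disch := first | exact add_left_injective _ | norm_num)),
          ← mul_finsum, ← mul_finsum, hshift]
        ring

def atomisticOp (k1 k2 : ℝ) : (ℤ → ℝ) →ₗ[ℝ] ℤ → ℝ :=
  -k1 • secondDiff 1 - k2 • secondDiff 2

section AtomisticOp

variable {k1 k2 : ℝ}

theorem atomisticOp_apply (u : ℤ → ℝ) (i : ℤ) :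
    atomisticOp k1 k2 u i =
      -k1 * (u (i - 1) - 2 * u i + u (i + 1)) - k2 * (u (i - 2) - 2 * u i + u (i + 2)) :=
  rfl

theorem atomisticOp_apply_eq_of_eqOn {u v : ℤ → ℝ} {i : ℤ}
    (h : Set.EqOn u v (Set.Icc (i - 2) (i + 2))) :
    atomisticOp k1 k2 u i = atomisticOp k1 k2 v i := by
  simp only [atomisticOp_apply]
  rw [h (x := i) ⟨by omega, by omega⟩, h (x := i - 1) ⟨by omega, by omega⟩,
    h (x := i + 1) ⟨by omega, by omega⟩, h (x := i - 2) ⟨by omega, by omega⟩,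
    h (x := i + 2) ⟨by omega, by omega⟩]

theorem finsum_atomisticOp_mul_self {v : ℤ → ℝ} (hv : v.HasFiniteSupport) :
    ∑ᶠ i, atomisticOp k1 k2 v i * v i =
      k1 * ∑ᶠ i, (v (i + 1) - v i) ^ 2 + k2 * ∑ᶠ i, (v (i + 2) - v i) ^ 2 := by
  have hpointwise : ∀ i, atomisticOp k1 k2 v i * v i =
      -k1 * (secondDiff 1 v i * v i) - k2 * (secondDiff 2 v i * v i) := by
    intro i
    simp only [atomisticOp_apply, secondDiff_apply]
    ring
  simp_rw [hpointwise]
  rw [finsum_sub_distrib (by fun_prop) (by fun_prop), ← mul_finsum, ← mul_finsum,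
    finsum_secondDiff_mul_self hv, finsum_secondDiff_mul_self hv]
  ring

theorem mul_finsum_sq_sub_le_finsum_atomisticOp_mul_self (hk2 : k2 ≤ 0) {v : ℤ → ℝ}
    (hv : v.HasFiniteSupport) :
    (k1 + 4 * k2) * ∑ᶠ i, (v (i + 1) - v i) ^ 2 ≤ ∑ᶠ i, atomisticOp k1 k2 v i * v i := by
  rw [finsum_atomisticOp_mul_self hv]
  linarith [mul_le_mul_of_nonpos_left (finsum_sq_sub_two_le hv) hk2]

theorem eq_zero_of_atomisticOp_mul_self_eq_zero (hk2 : k2 ≤ 0) (hk : 0 < k1 + 4 * k2)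
    {v : ℤ → ℝ} (hv : v.HasFiniteSupport) (hA : ∀ i, atomisticOp k1 k2 v i * v i = 0) :
    v = 0 := by
  refine hv.eq_zero_of_finsum_sq_sub_eq_zero
    (le_antisymm ?_ (finsum_nonneg fun _ => sq_nonneg _))
  have hcoercive := mul_finsum_sq_sub_le_finsum_atomisticOp_mul_self (k1 := k1) hk2 hv
  simp only [hA, finsum_zero] at hcoercive
  exact nonpos_of_mul_nonpos_right hcoercive hk

noncomputable def atomisticOpOn (k1 k2 : ℝ) (s : Set ℤ) : (s → ℝ) →ₗ[ℝ] s → ℝ :=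
  LinearMap.funLeft ℝ ℝ Subtype.val ∘ₗ atomisticOp k1 k2 ∘ₗ ExtendByZero.linearMap ℝ Subtype.val

theorem atomisticOpOn_injective (hk2 : k2 ≤ 0) (hk : 0 < k1 + 4 * k2) (s : Set ℤ) [Finite s] :
    Injective (atomisticOpOn k1 k2 s) := by
  refine (injective_iff_map_eq_zero _).mpr fun u hu => ?_
  set w : ℤ → ℝ := ExtendByZero.linearMap ℝ Subtype.val u
  have hw : ∀ x : s, w x = u x := fun x => Subtype.val_injective.extend_apply u 0 x
  have hw_out : ∀ i ∉ s, w i = 0 := fun i hi =>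
    extend_apply' _ _ _ fun ⟨x, hx⟩ => hi (hx ▸ x.2)
  have hw_supp : w.HasFiniteSupport :=
    (Set.toFinite s).subset fun i hi => by_contra fun h => hi (hw_out i h)
  have hw0 : w = 0 := by
    refine eq_zero_of_atomisticOp_mul_self_eq_zero hk2 hk hw_supp fun i => ?_
    by_cases hi : i ∈ s
    · rw [show atomisticOp k1 k2 w i = 0 from congrFun hu ⟨i, hi⟩, zero_mul]
    · rw [hw_out i hi, mul_zero]
  exact funext fun x => (hw x).symm.trans (congrFun hw0 x)

theorem exists_atomisticOp_eqOn (hk2 : k2 ≤ 0) (hk : 0 < k1 + 4 * k2) {s : Set ℤ}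
    (hs : s.Finite) (f : ℤ → ℝ) :
    ∃ c : ℤ → ℝ, (∀ i ∉ s, c i = 0) ∧ Set.EqOn (atomisticOp k1 k2 c) f s := by
  have := hs.to_subtype
  obtain ⟨u, hu⟩ :=
    LinearMap.injective_iff_surjective.mp (atomisticOpOn_injective hk2 hk s) fun x : s => f x
  exact ⟨ExtendByZero.linearMap ℝ Subtype.val u,
    fun i hi => extend_apply' _ _ _ fun ⟨x, hx⟩ => hi (hx ▸ x.2),
    fun i hi => congrFun hu ⟨i, hi⟩⟩

theorem eqOn_zero_of_atomisticOp_eqOn_zero (hk2 : k2 ≤ 0) (hk : 0 < k1 + 4 * k2) {L : ℤ}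
    {v : ℤ → ℝ} (hA : ∀ i, 2 ≤ i → i ≤ L - 2 → atomisticOp k1 k2 v i = 0)
    (h0 : v 0 = 0) (h1 : v 1 = 0) (hL1 : v (L - 1) = 0) (hL : v L = 0) :
    ∀ i, 0 ≤ i → i ≤ L → v i = 0 := by
  set w := (Set.Icc 2 (L - 2)).indicator v
  have hw_out : ∀ j ∉ Set.Icc 2 (L - 2), w j = 0 := fun j hj => Set.indicator_of_notMem hj v
  have hwv : Set.EqOn w v (Set.Icc 0 L) := by
    rintro j ⟨hj0, hjL⟩
    by_cases hj : j ∈ Set.Icc 2 (L - 2)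
    · exact Set.indicator_of_mem hj v
    · rw [hw_out j hj]
      obtain rfl | rfl | rfl | rfl : j = 0 ∨ j = 1 ∨ j = L - 1 ∨ j = L := by
        rw [Set.mem_Icc] at hj
        omega
      exacts [h0.symm, h1.symm, hL1.symm, hL.symm]
  have hw0 : w = 0 := by
    refine eq_zero_of_atomisticOp_mul_self_eq_zero hk2 hk
      ((Set.finite_Icc 2 (L - 2)).subset Set.support_indicator_subset) fun i => ?_
    by_cases hi : i ∈ Set.Icc 2 (L - 2)
    · rw [atomisticOp_apply_eq_of_eqOn (hwv.mono (Set.Icc_subset_Icc (by grind) (by grind))),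
        hA i hi.1 hi.2, zero_mul]
    · rw [hw_out i hi, mul_zero]
  exact fun i hi hiL => (hwv ⟨hi, hiL⟩).symm.trans (congrFun hw0 i)

end AtomisticOp

theorem atomistic_subproblem_well_posed_general (k1 k2 : ℝ)
    (hk2 : k2 < 0) (hk : 0 < k1 + 4 * k2) :
    ∃ L₀ : ℤ,
      ∀ (L : ℤ), 4 ≤ L → L₀ ≤ L →
      ∀ (g : ℤ → ℝ) (b₀ b₁ bL₁ bL : ℝ),
        -- existence
        (∃ ua : ℤ → ℝ,
          (∀ i, 2 ≤ i → i ≤ L - 2 →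
            -k1 * (ua (i - 1) - 2 * ua i + ua (i + 1))
              - k2 * (ua (i - 2) - 2 * ua i + ua (i + 2)) = g i) ∧
          ua 0 = b₀ ∧ ua 1 = b₁ ∧ ua (L - 1) = bL₁ ∧ ua L = bL) ∧
        -- uniqueness (on the subdomain {0,…,L})
        (∀ ua ua' : ℤ → ℝ,
          (∀ i, 2 ≤ i → i ≤ L - 2 →
            -k1 * (ua (i - 1) - 2 * ua i + ua (i + 1))
              - k2 * (ua (i - 2) - 2 * ua i + ua (i + 2)) = g i) →
          ua 0 = b₀ → ua 1 = b₁ → ua (L - 1) = bL₁ → ua L = bL →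
          (∀ i, 2 ≤ i → i ≤ L - 2 →
            -k1 * (ua' (i - 1) - 2 * ua' i + ua' (i + 1))
              - k2 * (ua' (i - 2) - 2 * ua' i + ua' (i + 2)) = g i) →
          ua' 0 = b₀ → ua' 1 = b₁ → ua' (L - 1) = bL₁ → ua' L = bL →
          ∀ i, 0 ≤ i → i ≤ L → ua i = ua' i) := by
  refine ⟨4, fun L hL _ g b₀ b₁ bL₁ bL => ⟨?_, ?_⟩⟩
  · obtain ⟨w, hw0, hw1, hwL1, hwL⟩ :
        ∃ w : ℤ → ℝ, w 0 = b₀ ∧ w 1 = b₁ ∧ w (L - 1) = bL₁ ∧ w L = bL :=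
      ⟨fun i => if i = 0 then b₀ else if i = 1 then b₁ else if i = L - 1 then bL₁ else bL,
        by simp, by simp, by simp [show L - 1 ≠ 0 by omega, show L - 1 ≠ 1 by omega],
        by simp [show L ≠ 0 by omega, show L ≠ 1 by omega, show L ≠ L - 1 by omega]⟩
    obtain ⟨c, hc_out, hc⟩ := exists_atomisticOp_eqOn hk2.le hk (Set.finite_Icc 2 (L - 2))
      (g - atomisticOp k1 k2 w)
    obtain ⟨hc0, hc1, hcL1, hcL⟩ : c 0 = 0 ∧ c 1 = 0 ∧ c (L - 1) = 0 ∧ c L = 0 :=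
      ⟨hc_out 0 (by rw [Set.mem_Icc]; omega), hc_out 1 (by rw [Set.mem_Icc]; omega),
        hc_out (L - 1) (by rw [Set.mem_Icc]; omega), hc_out L (by rw [Set.mem_Icc]; omega)⟩
    refine ⟨w + c, fun i hi hi' => ?_, ?_, ?_, ?_, ?_⟩
    · change atomisticOp k1 k2 (w + c) i = g i
      rw [map_add, Pi.add_apply, hc ⟨hi, hi'⟩, Pi.sub_apply, add_sub_cancel]
    all_goals simp only [Pi.add_apply, hw0, hw1, hwL1, hwL, hc0, hc1, hcL1, hcL, add_zero]
  · intro ua ua' hA h0 h1 hL1 hL hA' h0' h1' hL1' hL' i hi hiL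
    refine sub_eq_zero.mp (eqOn_zero_of_atomisticOp_eqOn_zero hk2.le hk (v := ua - ua')
      (fun j hj hj' => ?_) ?_ ?_ ?_ ?_ i hi hiL)
    · rw [map_sub, Pi.sub_apply, sub_eq_zero]
      exact (hA j hj hj').trans (hA' j hj hj').symm
    all_goals simp only [Pi.sub_apply, h0, h0', h1, h1', hL1, hL1', hL, hL', sub_self]

/-- well-posedness of the atomistic subproblem for large
subdomains: for L large enough the Dirichlet problem for the atomistic
operator has exactly one solution. -/
theorem atomistic_subproblem_well_posed (k1 k2 : ℝ)
    (hk1 : 0 < k1) (hk2 : k2 < 0) (hk : 0 < k1 + 4 * k2) :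
    ∃ L₀ : ℤ,
      ∀ (L : ℤ), 4 ≤ L → L₀ ≤ L →
      ∀ (g : ℤ → ℝ) (b₀ b₁ bL₁ bL : ℝ),
        -- existence
        (∃ ua : ℤ → ℝ,
          (∀ i, 2 ≤ i → i ≤ L - 2 →
            -k1 * (ua (i - 1) - 2 * ua i + ua (i + 1))
              - k2 * (ua (i - 2) - 2 * ua i + ua (i + 2)) = g i) ∧
          ua 0 = b₀ ∧ ua 1 = b₁ ∧ ua (L - 1) = bL₁ ∧ ua L = bL) ∧
        -- uniqueness (on the subdomain {0,…,L})
        (∀ ua ua' : ℤ → ℝ,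
          (∀ i, 2 ≤ i → i ≤ L - 2 →
            -k1 * (ua (i - 1) - 2 * ua i + ua (i + 1))
              - k2 * (ua (i - 2) - 2 * ua i + ua (i + 2)) = g i) →
          ua 0 = b₀ → ua 1 = b₁ → ua (L - 1) = bL₁ → ua L = bL →
          (∀ i, 2 ≤ i → i ≤ L - 2 →
            -k1 * (ua' (i - 1) - 2 * ua' i + ua' (i + 1))
              - k2 * (ua' (i - 2) - 2 * ua' i + ua' (i + 2)) = g i) →
          ua' 0 = b₀ → ua' 1 = b₁ → ua' (L - 1) = bL₁ → ua' L = bL →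
          ∀ i, 0 ≤ i → i ≤ L → ua i = ua' i) :=
  atomistic_subproblem_well_posed_general k1 k2 hk2 hk
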